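/- Let G = (V,E) be a finite simple undirected connected graph. Then |S| ≤ |N(S)| holds for every independent set S ⊆ V (equivalently ν̄_G ≤ 0) if and only if G is quasi-regularizable, i.e., there exists an assignment of non-negative integer weights to the edges of G such that the sum of the weights of the edges incident to each vertex equals the same strictly positive value for all vertices. -/

import Mathlib

/-!
If `|S| ≤ |N(S)|` for independent `S`, then it holds for every `T`: the part `T \ N(T)` is
independent and its neighbours lie in `N(T) \ T`. Hall's theorem then gives a permutation `σ`
with `v ~ σ v` for all `v`; weighting each edge by the number of arcs `v → σ v` running along it
gives weighted degree 2 everywhere, as one arc leaves and one enters each vertex. Conversely, if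
all weighted degrees equal `c > 0`, the weight on edges leaving `T` is `c |T|` and at most the
weight at `N(T)`, which is `c |N(T)|`.
-/

open Finset

variable {V : Type*}

/-- `N(T)`: the set of vertices adjacent to at least one vertex of `T`. -/
def nbhd [Fintype V] [DecidableEq V] (G : SimpleGraph V) [DecidableRel G.Adj]
    (T : Finset V) : Finset V :=
  Finset.univ.filter fun j => ∃ i ∈ T, G.Adj i j

/-- `S` is an independent set of `G`. -/
def IsIndepF (G : SimpleGraph V) (S : Finset V) : Prop :=
  ∀ i ∈ S, ∀ j ∈ S, ¬ G.Adj i j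

/-- `G` is quasi-regularizable: there is an assignment of non-negative integer weights to the
edges of `G` such that the sum of the weights of the edges incident to each vertex equals the
same strictly positive value for all vertices. -/
def QuasiRegularizable {W : Type*} (H : SimpleGraph W) : Prop :=
  ∃ (w : Sym2 W → ℕ) (c : ℕ), 0 < c ∧ ∀ i : W, ∑ᶠ e ∈ H.incidenceSet i, w e = c

namespace SimpleGraph

theorem incidenceSet_eq_image_neighborSet (G : SimpleGraph V) (v : V) :
    G.incidenceSet v = (fun w => s(v, w)) '' G.neighborSet v := by
  ext e
  induction e with
  | h a b =>
    simp only [incidenceSet, Set.mem_sep_iff, mem_edgeSet, Set.mem_image, mem_neighborSet,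
      Sym2.mem_iff, Sym2.eq_iff]
    constructor
    · rintro ⟨hab, rfl | rfl⟩
      · exact ⟨b, hab, by simp⟩
      · exact ⟨a, hab.symm, by simp⟩
    · rintro ⟨w, hvw, ⟨rfl, rfl⟩ | ⟨rfl, rfl⟩⟩
      · exact ⟨hvw, by simp⟩
      · exact ⟨hvw.symm, by simp⟩

theorem finsum_mem_incidenceSet {M : Type*} [AddCommMonoid M] (G : SimpleGraph V) (v : V)
    [Fintype (G.neighborSet v)] (w : Sym2 V → M) :
    ∑ᶠ e ∈ G.incidenceSet v, w e = ∑ u ∈ G.neighborFinset v, w s(v, u) := by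
  rw [incidenceSet_eq_image_neighborSet, finsum_mem_image (fun _ _ _ _ h => Sym2.congr_right.mp h),
    ← coe_neighborFinset, finsum_mem_coe_finset]

end SimpleGraph

section
variable [Fintype V] [DecidableEq V] (G : SimpleGraph V) [DecidableRel G.Adj]

theorem mem_nbhd {T : Finset V} {j : V} : j ∈ nbhd G T ↔ ∃ i ∈ T, G.Adj i j := by
  simp [nbhd]

theorem nbhd_eq_biUnion_neighborFinset (T : Finset V) :
    nbhd G T = T.biUnion fun v => G.neighborFinset v := by
  ext j
  simp [mem_nbhd]

theorem card_le_card_nbhd_of_forall_isIndepF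
    (h : ∀ S : Finset V, IsIndepF G S → #S ≤ #(nbhd G S)) (T : Finset V) :
    #T ≤ #(nbhd G T) := by
  set S := T \ nbhd G T
  have hS : IsIndepF G S := fun i hi j hj hij =>
    (mem_sdiff.mp hj).2 ((mem_nbhd G).mpr ⟨i, (mem_sdiff.mp hi).1, hij⟩)
  have hNS : nbhd G S ⊆ nbhd G T \ T := by
    intro x hx
    obtain ⟨s, hs, hsx⟩ := (mem_nbhd G).mp hx
    refine mem_sdiff.mpr ⟨(mem_nbhd G).mpr ⟨s, (mem_sdiff.mp hs).1, hsx⟩, fun hxT => ?_⟩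
    exact (mem_sdiff.mp hs).2 ((mem_nbhd G).mpr ⟨x, hxT, hsx.symm⟩)
  calc #T = #S + #(T ∩ nbhd G T) := (card_sdiff_add_card_inter T _).symm
    _ ≤ #(nbhd G T \ T) + #(nbhd G T ∩ T) := by
      rw [inter_comm]; exact Nat.add_le_add_right ((h S hS).trans (card_le_card hNS)) _
    _ = #(nbhd G T) := card_sdiff_add_card_inter _ _

theorem exists_perm_adj_of_forall_card_le_card_nbhd (h : ∀ T : Finset V, #T ≤ #(nbhd G T)) :
    ∃ σ : Equiv.Perm V, ∀ v, G.Adj v (σ v) := by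
  obtain ⟨f, hf, hfG⟩ :=
    (all_card_le_biUnion_card_iff_exists_injective fun v => G.neighborFinset v).mp
      fun T => nbhd_eq_biUnion_neighborFinset G T ▸ h T
  exact ⟨Equiv.ofBijective f (Finite.injective_iff_bijective.mp hf),
    fun v => (G.mem_neighborFinset v (f v)).mp (hfG v)⟩

theorem card_le_card_nbhd_of_sum_neighborFinset_eq (w : Sym2 V → ℕ) {c : ℕ} (hc : 0 < c)
    (hw : ∀ v, ∑ u ∈ G.neighborFinset v, w s(v, u) = c) (T : Finset V) :
    #T ≤ #(nbhd G T) := by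
  refine Nat.le_of_mul_le_mul_left ?_ hc
  calc c * #T = ∑ v ∈ T, ∑ u ∈ G.neighborFinset v, w s(v, u) := by simp [hw, mul_comm]
    _ = ∑ u ∈ nbhd G T, ∑ v ∈ T ∩ G.neighborFinset u, w s(v, u) :=
      sum_comm' fun v u => by
        simp only [SimpleGraph.mem_neighborFinset, mem_inter, mem_nbhd, G.adj_comm u v]; tauto
    _ ≤ ∑ u ∈ nbhd G T, ∑ v ∈ G.neighborFinset u, w s(u, v) := by
      gcongr with u
      simp_rw [Sym2.eq_swap (a := u)]
      exact sum_le_sum_of_subset inter_subset_right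
    _ = c * #(nbhd G T) := by simp [hw, mul_comm]

theorem quasiRegularizable_of_perm_adj (σ : Equiv.Perm V) (hσ : ∀ v, G.Adj v (σ v)) :
    QuasiRegularizable G := by
  let w : Sym2 V → ℕ := Sym2.lift
    ⟨fun a b => (if σ a = b then 1 else 0) + if σ b = a then 1 else 0, fun _ _ => add_comm _ _⟩
  refine ⟨w, 2, two_pos, fun v => ?_⟩
  have hout : σ v ∈ G.neighborFinset v := (G.mem_neighborFinset _ _).mpr (hσ v)
  have hin : σ.symm v ∈ G.neighborFinset v :=
    (G.mem_neighborFinset _ _).mpr (by simpa using (hσ (σ.symm v)).symm)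
  have hpre (u : V) : σ u = v ↔ u = σ.symm v := σ.eq_symm_apply.symm
  simp only [G.finsum_mem_incidenceSet, w, Sym2.lift_mk, sum_add_distrib, hpre, sum_ite_eq,
    sum_ite_eq', hout, hin, if_true]

theorem quasiRegularizable_iff_forall_card_le_card_nbhd :
    QuasiRegularizable G ↔ ∀ T : Finset V, #T ≤ #(nbhd G T) := by
  refine ⟨fun ⟨w, c, hc, hw⟩ => ?_, fun h => ?_⟩
  · exact card_le_card_nbhd_of_sum_neighborFinset_eq G w hc fun v =>
      (G.finsum_mem_incidenceSet v w).symm.trans (hw v)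
  · obtain ⟨σ, hσ⟩ := exists_perm_adj_of_forall_card_le_card_nbhd G h
    exact quasiRegularizable_of_perm_adj G σ hσ

end

theorem nonpos_vulnerability_iff_quasiRegularizable_general
    [Fintype V] [DecidableEq V] (G : SimpleGraph V) [DecidableRel G.Adj] :
    (∀ S : Finset V, IsIndepF G S → S.card ≤ (nbhd G S).card) ↔ QuasiRegularizable G := by
  rw [quasiRegularizable_iff_forall_card_le_card_nbhd G]
  exact ⟨card_le_card_nbhd_of_forall_isIndepF G, fun h S _ => h S⟩

/-- For a finite simple undirected connected graph `G`, `|S| ≤ |N(S)|` holds for every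
independent set `S ⊆ V` (equivalently `ν̄_G ≤ 0`) if and only if `G` is quasi-regularizable. -/
theorem nonpos_vulnerability_iff_quasiRegularizable
    [Fintype V] [DecidableEq V] (G : SimpleGraph V) [DecidableRel G.Adj]
    (hconn : G.Connected) :
    (∀ S : Finset V, IsIndepF G S → S.card ≤ (nbhd G S).card) ↔ QuasiRegularizable G :=
  nonpos_vulnerability_iff_quasiRegularizable_general G
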